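/- Let {G^{(m)}} be a sequence of finite marked groups with k generators each of which is amenable, and suppose every marked group in the Cayley closure of {G^{(m)}} is amenable. Then for every ε > 0 and C ∈ ℕ there exists R ∈ ℕ and, for each m, a family of unit vectors η_g ∈ ℓ²(G^{(m)}) indexed by g ∈ G^{(m)}, such that supp(η_g) ⊆ nbhd_R(g) and ‖η_g − η_h‖ < ε whenever d_m(g,h) ≤ C, where d_m is the word metric on G^{(m)}. (That is, the coarse disjoint union ⊔_m G^{(m)} has property A.) -/

import Mathlib

/-- The space `𝒩(k)` of normal subgroups of the free group `F_k`. -/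
def MarkedNormal (k : ℕ) : Type := {N : Subgroup (FreeGroup (Fin k)) // N.Normal}

open Classical in
/-- The characteristic function `χ_N ∈ {0,1}^{F_k}` of a normal subgroup. -/
noncomputable def chi (k : ℕ) (N : MarkedNormal k) : FreeGroup (Fin k) → Bool :=
  fun g => decide (g ∈ N.1)

/-- The Cayley topology on `𝒩(k)`: the topology of pointwise convergence of
characteristic functions. -/
noncomputable instance cayleyTopology (k : ℕ) : TopologicalSpace (MarkedNormal k) :=
  TopologicalSpace.induced (chi k) inferInstance

/-- The word length with respect to a generating set `S`. -/
noncomputable def wordLength {G : Type*} [Group G] (S : Set G) (g : G) : ℕ :=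
  sInf {n | ∃ l : List G, l.length = n ∧ (∀ x ∈ l, x ∈ S ∨ x⁻¹ ∈ S) ∧ l.prod = g}

/-- `nbhd S R Y = {g : ∃ h ∈ Y, d_S(g,h) ≤ R}`, the `R`-neighborhood of `Y` for the
word metric `d_S(g,h) = ℓ_S(g h⁻¹)`. -/
def nbhd {G : Type*} [Group G] (S : Set G) (R : ℕ) (Y : Set G) : Set G :=
  {g | ∃ h ∈ Y, wordLength S (g * h⁻¹) ≤ R}

/-- `FolnerRel(N; R) = min { #(∂₁Y)/#Y : ∅ ≠ Y ⊆ nbhd_R(1) }` computed in the marked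
quotient group `F_k/N` with the images of the free generators as markers;
here `∂₁Y = nbhd₁(Y) \ Y`. -/
noncomputable def FolnerRel (k : ℕ) (N : MarkedNormal k) (R : ℕ) : ℝ :=
  letI := N.2
  let S : Set (FreeGroup (Fin k) ⧸ N.1) :=
    Set.range fun i => (QuotientGroup.mk (FreeGroup.of i) : FreeGroup (Fin k) ⧸ N.1)
  sInf {r : ℝ | ∃ Y : Set (FreeGroup (Fin k) ⧸ N.1), Y.Nonempty ∧
      Y ⊆ nbhd S R {1} ∧
      r = ((nbhd S 1 Y \ Y).ncard : ℝ) / (Y.ncard : ℝ)}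

/-- The word metric `d_m` on the marked quotient `F_k/N`, with respect to the images of
the free generators. -/
noncomputable def quotDist (k : ℕ) (N : MarkedNormal k)
    (g h : FreeGroup (Fin k) ⧸ N.1) : ℕ :=
  letI := N.2
  wordLength
    (Set.range fun i => (QuotientGroup.mk (FreeGroup.of i) : FreeGroup (Fin k) ⧸ N.1))
    (g * h⁻¹)

/-!
Property A is witnessed by the normalized indicator functions `η_g = #Y^{-1/2} 1_{Y⁻¹g}` of a
Følner set `Y ⊆ B_R(1)`: translating `Y` by a generator moves at most `#∂Y` of its points, so
`‖η_g - η_h‖² ≤ 2 d(g,h) #∂Y / #Y`. It therefore suffices to find a single radius `R` at which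
every `G^{(m)}` has a Følner set of small ratio. Now `Rel(·; R)` only depends on the relations of
length at most `2R + 2`, hence is locally constant on the compact space of marked groups, and it
decreases in `R`. The open sets `{Rel(·; R) < δ}` thus form an increasing family, which covers the
Cayley closure by amenability; by compactness one member already covers it.
-/

open Set Pointwise Filter Topology

section WordBall

variable {G : Type*} [Group G] (S : Set G)

def wordBall (n : ℕ) : Set G :=
  {g | ∃ l : List G, l.length ≤ n ∧ (∀ x ∈ l, x ∈ S ∨ x⁻¹ ∈ S) ∧ l.prod = g}

variable {S}

lemma one_mem_wordBall (n : ℕ) : (1 : G) ∈ wordBall S n :=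
  ⟨[], by simp, by simp, rfl⟩

lemma wordBall_mono {m n : ℕ} (h : m ≤ n) : wordBall S m ⊆ wordBall S n := by
  rintro _ ⟨l, hl, hlS, rfl⟩
  exact ⟨l, hl.trans h, hlS, rfl⟩

lemma mem_wordBall_one {x : G} (hx : x ∈ S ∨ x⁻¹ ∈ S) : x ∈ wordBall S 1 :=
  ⟨[x], by simp, by simpa using hx, by simp⟩

lemma mul_mem_wordBall {m n : ℕ} {a b : G} (ha : a ∈ wordBall S m) (hb : b ∈ wordBall S n) :
    a * b ∈ wordBall S (m + n) := by
  obtain ⟨l, hl, hlS, rfl⟩ := ha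
  obtain ⟨l', hl', hl'S, rfl⟩ := hb
  exact ⟨l ++ l', by simpa using add_le_add hl hl', List.forall_mem_append.2 ⟨hlS, hl'S⟩,
    List.prod_append⟩

lemma wordBall_mul_subset (m n : ℕ) : wordBall S m * wordBall S n ⊆ wordBall S (m + n) :=
  Set.mul_subset_iff.2 fun _ ha _ hb => mul_mem_wordBall ha hb

lemma inv_mem_wordBall {n : ℕ} {a : G} (ha : a ∈ wordBall S n) : a⁻¹ ∈ wordBall S n := by
  obtain ⟨l, hl, hlS, rfl⟩ := ha
  refine ⟨(l.map (·⁻¹)).reverse, by simpa using hl, fun x hx => ?_, (List.prod_inv_reverse l).symm⟩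
  obtain ⟨y, hy, rfl⟩ := List.mem_map.1 (List.mem_reverse.1 hx)
  simpa [or_comm] using hlS y hy

lemma exists_mem_wordBall {g : G} (hg : g ∈ Subgroup.closure S) : ∃ n, g ∈ wordBall S n := by
  induction hg using Subgroup.closure_induction with
  | mem x hx => exact ⟨1, mem_wordBall_one (Or.inl hx)⟩
  | one => exact ⟨0, one_mem_wordBall 0⟩
  | mul _ _ _ _ ha hb =>
    obtain ⟨m, ha⟩ := ha
    obtain ⟨n, hb⟩ := hb
    exact ⟨m + n, mul_mem_wordBall ha hb⟩
  | inv _ _ ha =>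
    obtain ⟨n, ha⟩ := ha
    exact ⟨n, inv_mem_wordBall ha⟩

lemma wordLength_le_of_mem_wordBall {g : G} {n : ℕ} (hg : g ∈ wordBall S n) :
    wordLength S g ≤ n := by
  obtain ⟨l, hl, hlS, rfl⟩ := hg
  unfold wordLength
  exact le_trans (Nat.sInf_le ⟨l, rfl, hlS, rfl⟩) hl

lemma wordLength_le_iff (hS : Subgroup.closure S = ⊤) {g : G} {n : ℕ} :
    wordLength S g ≤ n ↔ g ∈ wordBall S n := by
  refine ⟨fun h => ?_, wordLength_le_of_mem_wordBall⟩
  obtain ⟨m, l, -, hlS, hl⟩ := exists_mem_wordBall (hS ▸ Subgroup.mem_top g)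
  unfold wordLength at h
  obtain ⟨l', hl', hl'S, rfl⟩ := Nat.sInf_mem (⟨_, l, rfl, hlS, hl⟩ :
    {m | ∃ l : List G, l.length = m ∧ (∀ x ∈ l, x ∈ S ∨ x⁻¹ ∈ S) ∧ l.prod = g}.Nonempty)
  exact ⟨l', hl'.trans_le h, hl'S, rfl⟩

lemma finite_wordBall (hS : S.Finite) (n : ℕ) : (wordBall S n).Finite := by
  have : Finite ↥(S ∪ S⁻¹) := (hS.union hS.inv).to_subtype
  refine ((List.finite_length_le ↥(S ∪ S⁻¹) n).image fun l => (l.map Subtype.val).prod).subset ?_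
  rintro _ ⟨l, hl, hlS, rfl⟩
  have hlS' : ∀ x ∈ l, x ∈ S ∪ S⁻¹ := hlS
  exact ⟨l.attachWith _ hlS', by simpa using hl, by simp⟩

lemma image_wordBall {H : Type*} [Group H] (f : G →* H) (n : ℕ) :
    f '' wordBall S n = wordBall (f '' S) n := by
  refine subset_antisymm ?_ ?_
  · rintro _ ⟨_, ⟨l, hl, hlS, rfl⟩, rfl⟩
    refine ⟨l.map f, by simpa using hl, ?_, (map_list_prod f l).symm⟩
    simp only [List.mem_map, forall_exists_index, and_imp, forall_apply_eq_imp_iff₂]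
    intro x hx
    rcases hlS x hx with h | h
    · exact Or.inl (mem_image_of_mem f h)
    · exact Or.inr ⟨x⁻¹, h, map_inv f x⟩
  · rintro _ ⟨l, hl, hlS, rfl⟩
    induction l generalizing n with
    | nil => exact ⟨1, one_mem_wordBall n, map_one f⟩
    | cons x l ih =>
      obtain ⟨n, rfl⟩ := Nat.exists_eq_add_of_lt (Nat.lt_of_lt_of_le (Nat.zero_lt_succ _) hl)
      obtain ⟨y, hy, rfl⟩ : ∃ y ∈ wordBall S 1, f y = x := by
        rcases hlS x List.mem_cons_self with ⟨y, hy, rfl⟩ | ⟨y, hy, hyx⟩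
        · exact ⟨y, mem_wordBall_one (Or.inl hy), rfl⟩
        · exact ⟨y⁻¹, mem_wordBall_one (Or.inr (by rwa [inv_inv])), by rw [map_inv, hyx, inv_inv]⟩
      obtain ⟨z, hz, hzl⟩ := ih n (by simpa using hl) fun x hx => hlS x (List.mem_cons_of_mem _ hx)
      refine ⟨y * z, ?_, by rw [map_mul, hzl, List.prod_cons]⟩
      simpa [add_comm] using mul_mem_wordBall hy hz

lemma nbhd_eq_wordBall_mul (hS : Subgroup.closure S = ⊤) (n : ℕ) (Y : Set G) :
    nbhd S n Y = wordBall S n * Y := by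
  ext g
  simp only [nbhd, wordLength_le_iff hS, Set.mem_ofPred_eq, Set.mem_mul]
  constructor
  · rintro ⟨h, hh, hg⟩
    exact ⟨_, hg, h, hh, inv_mul_cancel_right g h⟩
  · rintro ⟨a, ha, h, hh, rfl⟩
    exact ⟨h, hh, by simpa using ha⟩

lemma nbhd_singleton_one (hS : Subgroup.closure S = ⊤) (n : ℕ) :
    nbhd S n {1} = wordBall S n := by
  rw [nbhd_eq_wordBall_mul hS, singleton_one, mul_one]

end WordBall

section Fibers

variable {α β γ : Type*} {A P Q : Set α} {f : α → β} {f' : α → γ}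

lemma ncard_image_eq_of_fibers (hfib : ∀ a ∈ A, ∀ b ∈ A, f a = f b ↔ f' a = f' b)
    (hP : P ⊆ A) : (f '' P).ncard = (f' '' P).ncard := by
  refine ncard_congr (fun y hy => f' hy.choose) (fun y hy => mem_image_of_mem f' hy.choose_spec.1)
    (fun y z hy hz e => ?_) ?_
  · rw [← hy.choose_spec.2, ← hz.choose_spec.2]
    exact (hfib _ (hP hy.choose_spec.1) _ (hP hz.choose_spec.1)).2 e
  · rintro _ ⟨p, hp, rfl⟩
    have hfp : f p ∈ f '' P := mem_image_of_mem f hp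
    exact ⟨f p, hfp, (hfib _ (hP hfp.choose_spec.1) _ (hP hp)).1 hfp.choose_spec.2⟩

lemma ncard_image_sdiff_image_eq_of_fibers (hfib : ∀ a ∈ A, ∀ b ∈ A, f a = f b ↔ f' a = f' b)
    (hP : P ⊆ A) (hQ : Q ⊆ A) : (f '' P \ f '' Q).ncard = (f' '' P \ f' '' Q).ncard := by
  have hpre : P \ f ⁻¹' (f '' Q) = P \ f' ⁻¹' (f' '' Q) := by
    ext p
    simp only [Set.mem_sdiff, mem_preimage, mem_image]
    exact and_congr_right fun hp => not_congr <| exists_congr fun q =>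
      and_congr_right fun hq => hfib q (hQ hq) p (hP hp)
  rw [← image_sdiff_preimage, ← image_sdiff_preimage, hpre]
  exact ncard_image_eq_of_fibers hfib (sdiff_subset.trans hP)

end Fibers

lemma mul_smul_sdiff_subset {M α : Type*} [Group M] [MulAction M α] (a b : M) (Y : Set α) :
    (a * b) • Y \ Y ⊆ a • (b • Y \ Y) ∪ (a • Y \ Y) := by
  rw [smul_set_sdiff, smul_smul]
  exact sdiff_triangle _ _ _

lemma finsum_indicator_sub_indicator_sq {α : Type*} {A B : Set α} (hA : A.Finite)
    (hB : B.Finite) (c : ℝ) :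
    ∑ᶠ x, (A.indicator (fun _ => c) x - B.indicator (fun _ => c) x) ^ 2 =
      c ^ 2 * ((A \ B).ncard + (B \ A).ncard) := by
  have hconst : ∀ s : Set α, s.Finite → ∑ᶠ x, s.indicator (fun _ => c ^ 2) x = c ^ 2 * s.ncard :=
    fun s hs => by
      rw [← finsum_mem_def, finsum_mem_eq_finite_toFinset_sum _ hs, Finset.sum_const,
        nsmul_eq_mul, ncard_eq_toFinset_card _ hs, mul_comm]
  have hpt : ∀ x, (A.indicator (fun _ => c) x - B.indicator (fun _ => c) x) ^ 2 =
      (A \ B).indicator (fun _ => c ^ 2) x + (B \ A).indicator (fun _ => c ^ 2) x := by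
    intro x
    by_cases hxA : x ∈ A <;> by_cases hxB : x ∈ B <;> simp [indicator, hxA, hxB]
  rw [finsum_congr hpt, finsum_add_distrib (hA.sdiff.subset (support_indicator_subset))
    (hB.sdiff.subset (support_indicator_subset)), hconst _ hA.sdiff, hconst _ hB.sdiff, mul_add]

section Folner

variable {G : Type*} [Group G] (S : Set G)

def folnerRatios (R : ℕ) : Set ℝ :=
  {r | ∃ Y : Set G, Y.Nonempty ∧ Y ⊆ nbhd S R {1} ∧
    r = ((nbhd S 1 Y \ Y).ncard : ℝ) / (Y.ncard : ℝ)}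

lemma bddBelow_folnerRatios (R : ℕ) : BddBelow (folnerRatios S R) :=
  ⟨0, by rintro _ ⟨Y, -, -, rfl⟩; positivity⟩

lemma folnerRatios_nonempty (R : ℕ) : (folnerRatios S R).Nonempty :=
  ⟨_, {1}, singleton_nonempty 1, by
    simpa [nbhd] using wordLength_le_of_mem_wordBall (one_mem_wordBall (S := S) R), rfl⟩

lemma folnerRatios_mono {R R' : ℕ} (h : R ≤ R') : folnerRatios S R ⊆ folnerRatios S R' := by
  rintro _ ⟨Y, hY, hYR, rfl⟩
  refine ⟨Y, hY, fun y hy => ?_, rfl⟩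
  obtain ⟨o, ho, hyo⟩ := hYR hy
  exact ⟨o, ho, hyo.trans h⟩

lemma antitone_sInf_folnerRatios : Antitone fun R => sInf (folnerRatios S R) :=
  fun _ _ h => csInf_le_csInf (bddBelow_folnerRatios S _) (folnerRatios_nonempty S _)
    (folnerRatios_mono S h)

variable {S}

lemma finite_nbhd (hS : Subgroup.closure S = ⊤) (hSf : S.Finite) (n : ℕ) {Y : Set G}
    (hY : Y.Finite) : (nbhd S n Y).Finite := by
  rw [nbhd_eq_wordBall_mul hS]
  exact (finite_wordBall hSf n).mul hY

lemma smul_sdiff_subset_boundary {x : G} (hx : x ∈ S ∨ x⁻¹ ∈ S) (Y : Set G) :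
    x • Y \ Y ⊆ nbhd S 1 Y \ Y := by
  rintro _ ⟨⟨y, hy, rfl⟩, hxy⟩
  exact ⟨⟨y, hy, by simpa using wordLength_le_of_mem_wordBall (mem_wordBall_one hx)⟩, hxy⟩

lemma ncard_smul_sdiff_le {Y : Set G} (hY : Y.Finite) (hbd : (nbhd S 1 Y \ Y).Finite)
    {n : ℕ} {t : G} (ht : t ∈ wordBall S n) :
    (t • Y \ Y).ncard ≤ n * (nbhd S 1 Y \ Y).ncard := by
  obtain ⟨l, hl, hlS, rfl⟩ := ht
  refine le_trans ?_ (Nat.mul_le_mul_right _ hl)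
  clear hl
  induction l with
  | nil => simp
  | cons x l ih =>
    have hx := hlS x List.mem_cons_self
    calc ((x * l.prod) • Y \ Y).ncard
        ≤ (x • (l.prod • Y \ Y) ∪ (x • Y \ Y)).ncard :=
          ncard_le_ncard (mul_smul_sdiff_subset x l.prod Y)
            ((hY.smul_set.sdiff.smul_set).union hY.smul_set.sdiff)
      _ ≤ (l.prod • Y \ Y).ncard + (x • Y \ Y).ncard := by
          rw [← ncard_smul_set x (l.prod • Y \ Y)]
          exact ncard_union_le _ _
      _ ≤ l.length * (nbhd S 1 Y \ Y).ncard + (nbhd S 1 Y \ Y).ncard :=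
          add_le_add (ih fun y hy => hlS y (List.mem_cons_of_mem x hy))
            (ncard_le_ncard (smul_sdiff_subset_boundary hx Y) hbd)
      _ = (x :: l).length * (nbhd S 1 Y \ Y).ncard := by simp [add_mul]

end Folner

section AlmostInvariant

variable {G : Type*} [Group G] {S : Set G}

lemma preimage_div_sdiff (g h : G) (Y : Set G) :
    (g / ·) ⁻¹' Y \ (h / ·) ⁻¹' Y = (h / ·) ⁻¹' ((h / g) • Y \ Y) := by
  ext x
  simp [mem_smul_set_iff_inv_smul_mem, div_mul_div_cancel]

theorem exists_unit_vectors_of_folner_set (hS : Subgroup.closure S = ⊤) (hSf : S.Finite)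
    {ε : ℝ} (hε : 0 < ε) {C R : ℕ} {Y : Set G} (hYR : Y ⊆ wordBall S R)
    (hY : 2 * C * ((nbhd S 1 Y \ Y).ncard : ℝ) < ε ^ 2 * Y.ncard) :
    ∃ η : G → G → ℝ, (∀ g, ∑ᶠ x, (η g x) ^ 2 = 1) ∧
      (∀ g x, η g x ≠ 0 → wordLength S (x * g⁻¹) ≤ R) ∧
      (∀ g h, wordLength S (g * h⁻¹) ≤ C → Real.sqrt (∑ᶠ x, (η g x - η h x) ^ 2) < ε) := by
  have hYf : Y.Finite := (finite_wordBall hSf R).subset hYR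
  have hYpos : (0 : ℝ) < Y.ncard := by
    refine lt_of_le_of_ne (Nat.cast_nonneg _) fun h0 => ?_
    rw [← h0, mul_zero] at hY
    exact hY.not_ge (by positivity)
  have hbd : (nbhd S 1 Y \ Y).Finite := (finite_nbhd hS hSf 1 hYf).sdiff
  have hZ : ∀ (g : G) (A : Set G), ((g / ·) ⁻¹' A).ncard = A.ncard := fun g _ =>
    ncard_preimage_of_injective_subset_range div_right_injective
      ((Equiv.divLeft g).surjective.range_eq ▸ subset_univ _)
  have hZf : ∀ g : G, ((g / ·) ⁻¹' Y).Finite := fun _ => hYf.preimage div_right_injective.injOn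
  set c := (Real.sqrt Y.ncard)⁻¹
  have hc : c ^ 2 = (Y.ncard : ℝ)⁻¹ := by rw [inv_pow, Real.sq_sqrt hYpos.le]
  refine ⟨fun g => ((g / ·) ⁻¹' Y).indicator fun _ => c, fun g => ?_, fun g x hx => ?_,
    fun g h hgh => ?_⟩
  · simpa [hZ, hc, hYpos.ne'] using finsum_indicator_sub_indicator_sq (hZf g) finite_empty c
  · have hgx : x ∈ (g / ·) ⁻¹' Y := mem_of_indicator_ne_zero hx
    simpa [div_eq_mul_inv] using wordLength_le_of_mem_wordBall (inv_mem_wordBall (hYR hgx))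
  · have ht : g / h ∈ wordBall S C := (wordLength_le_iff hS).1 (by rwa [div_eq_mul_inv])
    have h1 := ncard_smul_sdiff_le hYf hbd (inv_mem_wordBall ht)
    have h2 := ncard_smul_sdiff_le hYf hbd ht
    rw [inv_div] at h1
    have hsum : (((h / g) • Y \ Y).ncard : ℝ) + ((g / h) • Y \ Y).ncard ≤
        2 * C * (nbhd S 1 Y \ Y).ncard := by
      exact_mod_cast (add_le_add h1 h2).trans_eq (by ring)
    rw [Real.sqrt_lt' hε, finsum_indicator_sub_indicator_sq (hZf g) (hZf h), preimage_div_sdiff,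
      preimage_div_sdiff, hZ, hZ, hc, inv_mul_lt_iff₀ hYpos]
    linarith

theorem exists_unit_vectors_of_sInf_folnerRatios_lt (hS : Subgroup.closure S = ⊤)
    (hSf : S.Finite) {ε : ℝ} (hε : 0 < ε) {C R : ℕ}
    (h : sInf (folnerRatios S R) < ε ^ 2 / (2 * C + 1)) :
    ∃ η : G → G → ℝ, (∀ g, ∑ᶠ x, (η g x) ^ 2 = 1) ∧
      (∀ g x, η g x ≠ 0 → wordLength S (x * g⁻¹) ≤ R) ∧
      (∀ g h, wordLength S (g * h⁻¹) ≤ C → Real.sqrt (∑ᶠ x, (η g x - η h x) ^ 2) < ε) := by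
  obtain ⟨_, ⟨Y, hYne, hYR, rfl⟩, hlt⟩ := exists_lt_of_csInf_lt (folnerRatios_nonempty S R) h
  rw [nbhd_singleton_one hS] at hYR
  have hYpos : (0 : ℝ) < Y.ncard := by
    exact_mod_cast (ncard_pos ((finite_wordBall hSf R).subset hYR)).2 hYne
  refine exists_unit_vectors_of_folner_set hS hSf hε hYR ?_
  rw [div_lt_div_iff₀ hYpos (by positivity)] at hlt
  nlinarith [(Nat.cast_nonneg _ : (0 : ℝ) ≤ (nbhd S 1 Y \ Y).ncard)]

end AlmostInvariant

section Quotients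

variable {F G G' : Type*} [Group F] [Group G] [Group G'] {T : Set F}

lemma closure_image_eq_top (hT : Subgroup.closure T = ⊤) {f : F →* G}
    (hf : Function.Surjective f) : Subgroup.closure (f '' T) = ⊤ := by
  rw [← MonoidHom.map_closure, hT, Subgroup.map_top_of_surjective f hf]

lemma nbhd_image (hT : Subgroup.closure T = ⊤) {f : F →* G} (hf : Function.Surjective f)
    (n : ℕ) (Z : Set F) : nbhd (f '' T) n (f '' Z) = f '' (wordBall T n * Z) := by
  rw [nbhd_eq_wordBall_mul (closure_image_eq_top hT hf), ← image_wordBall, image_mul]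

theorem folnerRatios_subset_of_ker_agree (hT : Subgroup.closure T = ⊤) {f : F →* G}
    (hf : Function.Surjective f) {f' : F →* G'} (hf' : Function.Surjective f') {R : ℕ}
    (h : ∀ w ∈ wordBall T (2 * R + 2), f w = 1 ↔ f' w = 1) :
    folnerRatios (f '' T) R ⊆ folnerRatios (f' '' T) R := by
  have hfib : ∀ a ∈ wordBall T (R + 1), ∀ b ∈ wordBall T (R + 1), f a = f b ↔ f' a = f' b := by
    intro a ha b hb
    rw [← inv_mul_eq_one, ← map_inv, ← map_mul, ← inv_mul_eq_one (a := f' a), ← map_inv,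
      ← map_mul]
    exact h _ (wordBall_mono (by omega) (mul_mem_wordBall (inv_mem_wordBall ha) hb))
  rintro _ ⟨Y, hYne, hYR, rfl⟩
  rw [nbhd_singleton_one (closure_image_eq_top hT hf), ← image_wordBall] at hYR
  -- Both ratios are computed from the lift `Y₀` of `Y` and from `wordBall T 1 * Y₀`, all inside
  -- the free ball of radius `R + 1`, on which `f` and `f'` have the same fibres.
  set Y₀ := wordBall T R ∩ f ⁻¹' Y
  have hY₀ : f '' Y₀ = Y := by rw [image_inter_preimage, inter_eq_right.2 hYR]
  have hY₀R : Y₀ ⊆ wordBall T (R + 1) := inter_subset_left.trans (wordBall_mono (by omega))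
  have hbdR : wordBall T 1 * Y₀ ⊆ wordBall T (R + 1) :=
    (mul_subset_mul_left inter_subset_left).trans
      ((wordBall_mul_subset 1 R).trans (wordBall_mono (by omega)))
  refine ⟨f' '' Y₀, (hY₀ ▸ hYne).of_image.image f', ?_, ?_⟩
  · rw [nbhd_singleton_one (closure_image_eq_top hT hf'), ← image_wordBall]
    exact image_mono inter_subset_left
  · rw [← hY₀, nbhd_image hT hf, nbhd_image hT hf',
      ncard_image_sdiff_image_eq_of_fibers hfib hbdR hY₀R, ncard_image_eq_of_fibers hfib hY₀R]

end Quotients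

lemma isClopen_setOf_apply_eq {X : Type*} (a : X) (b : Bool) : IsClopen {f : X → Bool | f a = b} :=
  (isClopen_discrete {b}).preimage (continuous_apply a)

section CayleyTopology

variable {k : ℕ}

instance MarkedNormal.normal (M : MarkedNormal k) : M.1.Normal := M.2

lemma range_mk_of (M : MarkedNormal k) :
    (Set.range fun i => (QuotientGroup.mk (FreeGroup.of i) : FreeGroup (Fin k) ⧸ M.1)) =
      QuotientGroup.mk' M.1 '' Set.range FreeGroup.of :=
  range_comp _ _

lemma folnerRel_eq (M : MarkedNormal k) (R : ℕ) :
    FolnerRel k M R = sInf (folnerRatios (QuotientGroup.mk' M.1 '' Set.range FreeGroup.of) R) := by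
  rw [← range_mk_of]
  rfl

lemma antitone_folnerRel (M : MarkedNormal k) : Antitone (FolnerRel k M) := by
  intro R R' h
  rw [folnerRel_eq, folnerRel_eq]
  exact antitone_sInf_folnerRatios _ h

lemma folnerRel_eq_of_chi_eq {M M' : MarkedNormal k} {R : ℕ}
    (h : ∀ w ∈ wordBall (Set.range FreeGroup.of) (2 * R + 2), chi k M w = chi k M' w) :
    FolnerRel k M R = FolnerRel k M' R := by
  have hsub : ∀ {M M' : MarkedNormal k},
      (∀ w ∈ wordBall (Set.range FreeGroup.of) (2 * R + 2), chi k M w = chi k M' w) →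
      FolnerRel k M' R ≤ FolnerRel k M R := fun {M M'} hM => by
    rw [folnerRel_eq, folnerRel_eq]
    refine csInf_le_csInf (bddBelow_folnerRatios _ R) (folnerRatios_nonempty _ R)
      (folnerRatios_subset_of_ker_agree (FreeGroup.closure_range_of _)
        (QuotientGroup.mk'_surjective _) (QuotientGroup.mk'_surjective _) fun w hw => ?_)
    simpa [QuotientGroup.eq_one_iff, chi, decide_eq_decide] using hM w hw
  exact le_antisymm (hsub fun w hw => (h w hw).symm) (hsub h)

lemma isEmbedding_chi : Topology.IsEmbedding (chi k) :=
  ⟨⟨rfl⟩, fun M M' h => Subtype.ext <| SetLike.ext fun w => by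
    simpa [chi] using congrFun h w⟩

lemma range_chi : Set.range (chi k) = {f | f 1 = true ∧
    (∀ a b, f a = true → f b = true → f (a * b⁻¹) = true) ∧
    ∀ a b, f b = true → f (a * b * a⁻¹) = true} := by
  ext f
  constructor
  · rintro ⟨M, rfl⟩
    simp only [chi, decide_eq_true_eq, mem_ofPred_eq]
    exact ⟨M.1.one_mem, fun a b ha hb => M.1.mul_mem ha (M.1.inv_mem hb),
      fun a b hb => M.2.conj_mem b hb a⟩
  · rintro ⟨h1, hdiv, hconj⟩
    refine ⟨⟨Subgroup.ofDiv {w | f w = true} ⟨1, h1⟩ fun a ha b hb => hdiv a b ha hb,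
      ⟨fun n hn g => hconj g n hn⟩⟩, funext fun w => ?_⟩
    exact Bool.decide_eq_true

lemma isClosed_range_chi : IsClosed (Set.range (chi k)) := by
  have himp : ∀ a b : FreeGroup (Fin k),
      IsClosed {f : FreeGroup (Fin k) → Bool | f a = true → f b = true} :=
    fun a b => isClosed_imp (isClopen_setOf_apply_eq a true).isOpen
      (isClopen_setOf_apply_eq b true).isClosed
  rw [range_chi]
  simp only [ofPred_and, ofPred_forall]
  exact (isClopen_setOf_apply_eq 1 true).isClosed.inter
    ((isClosed_iInter fun a => isClosed_iInter fun b =>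
      isClosed_imp (isClopen_setOf_apply_eq a true).isOpen (himp b (a * b⁻¹))).inter
      (isClosed_iInter fun a => isClosed_iInter fun b => himp b (a * b * a⁻¹)))

instance : CompactSpace (MarkedNormal k) :=
  ⟨by simpa [isEmbedding_chi.isCompact_iff] using isClosed_range_chi.isCompact⟩

lemma isLocallyConstant_folnerRel (R : ℕ) : IsLocallyConstant fun M => FolnerRel k M R := by
  refine (IsLocallyConstant.iff_eventually_eq _).2 fun M => ?_
  have hchi : ∀ w, ∀ᶠ M' in 𝓝 M, chi k M' w = chi k M w := fun w =>
    ((isClopen_setOf_apply_eq w (chi k M w)).isOpen.preimage continuous_induced_dom).mem_nhds rfl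
  have hball := finite_wordBall (finite_range (FreeGroup.of (α := Fin k))) (2 * R + 2)
  filter_upwards [hball.eventually_all.2 fun w _ => hchi w] with M' hM'
  exact folnerRel_eq_of_chi_eq hM'

theorem exists_forall_folnerRel_lt {K : Set (MarkedNormal k)} (hK : IsCompact K)
    (hamen : ∀ M ∈ K, (⨅ R : ℕ, FolnerRel k M R) = 0) {δ : ℝ} (hδ : 0 < δ) :
    ∃ R : ℕ, ∀ M ∈ K, FolnerRel k M R < δ :=
  hK.elim_directed_cover (fun R => {M | FolnerRel k M R < δ})
    (fun R => isLocallyConstant_folnerRel R (Iio δ))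
    (fun M hM => mem_iUnion.2 (exists_lt_of_ciInf_lt (by rw [hamen M hM]; exact hδ)))
    (Monotone.directed_le fun _ _ h M hM => (antitone_folnerRel M h).trans_lt hM)

end CayleyTopology

theorem propertyA_of_amenable_cayley_closure_general (k : ℕ) (Nseq : ℕ → MarkedNormal k)
    (hamen : ∀ M ∈ closure (Set.range Nseq), (⨅ R : ℕ, FolnerRel k M R) = 0) :
    ∀ ε : ℝ, 0 < ε → ∀ C : ℕ, ∃ R : ℕ, ∀ m : ℕ,
      ∃ η : (FreeGroup (Fin k) ⧸ (Nseq m).1) → (FreeGroup (Fin k) ⧸ (Nseq m).1) → ℝ,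
        (∀ g, ∑ᶠ x, (η g x) ^ 2 = 1) ∧
        (∀ g x, η g x ≠ 0 → quotDist k (Nseq m) x g ≤ R) ∧
        (∀ g h, quotDist k (Nseq m) g h ≤ C →
          Real.sqrt (∑ᶠ x, (η g x - η h x) ^ 2) < ε) := by
  intro ε hε C
  obtain ⟨R, hR⟩ := exists_forall_folnerRel_lt isClosed_closure.isCompact hamen
    (δ := ε ^ 2 / (2 * C + 1)) (by positivity)
  refine ⟨R, fun m => ?_⟩
  have hm := hR (Nseq m) (subset_closure (mem_range_self m))
  rw [folnerRel_eq] at hm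
  have h := exists_unit_vectors_of_sInf_folnerRatios_lt
    (closure_image_eq_top (FreeGroup.closure_range_of _) (QuotientGroup.mk'_surjective _))
    ((finite_range _).image _) hε hm
  rw [← range_mk_of] at h
  exact h

/-- Let `{G^{(m)}}` be finite marked groups with `k` generators, each amenable, such
that every marked group in the Cayley closure of `{G^{(m)}}` is amenable (amenability
being expressed by `inf_R Rel(·;R) = 0`).  Then for every `ε > 0` and `C ∈ ℕ` there is
`R ∈ ℕ` and, for each `m`, unit vectors `η_g ∈ ℓ²(G^{(m)})`, `g ∈ G^{(m)}`, with
`supp η_g ⊆ nbhd_R(g)` and `‖η_g − η_h‖ < ε` whenever `d_m(g,h) ≤ C`; i.e. the coarse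
disjoint union `⊔ₘ G^{(m)}` has property A. -/
theorem propertyA_of_amenable_cayley_closure (k : ℕ) (Nseq : ℕ → MarkedNormal k)
    (hfin : ∀ m, Finite (FreeGroup (Fin k) ⧸ (Nseq m).1))
    (hamen : ∀ M ∈ closure (Set.range Nseq), (⨅ R : ℕ, FolnerRel k M R) = 0) :
    ∀ ε : ℝ, 0 < ε → ∀ C : ℕ, ∃ R : ℕ, ∀ m : ℕ,
      ∃ η : (FreeGroup (Fin k) ⧸ (Nseq m).1) → (FreeGroup (Fin k) ⧸ (Nseq m).1) → ℝ,
        (∀ g, ∑ᶠ x, (η g x) ^ 2 = 1) ∧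
        (∀ g x, η g x ≠ 0 → quotDist k (Nseq m) x g ≤ R) ∧
        (∀ g h, quotDist k (Nseq m) g h ≤ C →
          Real.sqrt (∑ᶠ x, (η g x - η h x) ^ 2) < ε) :=
  propertyA_of_amenable_cayley_closure_general k Nseq hamen
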